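/- arXiv:1601.05106 — 3 statements merged into one kernel-verified Lean document; each statement's English description precedes it below -/
import Mathlib

section
/- Reflexivity of declarative subtyping: if type A is well-formed under declarative context Ψ, then A is a subtype of itself under Ψ at either polarity (A ≤± A). -/
/-- Sorts κ ∈ {⋆, ℕ}. -/
inductive Srt : Type
  | star
  | nat
  deriving DecidableEq

/-- Declarative contexts Ψ: lists of universal-variable declarations `α : κ`.
The head of the list is the rightmost (most recent) declaration, so `Ψ, α:κ`
is `(α, κ) :: Ψ` and `Ψ₀, Ψ₁` is `Ψ₁ ++ Ψ₀`. -/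
abbrev DCtx := List (ℕ × Srt)

/-- Types and index terms, with named variables:
`1 | α | zero | succ t | A → B | A + B | A × B | ∀α:κ. A | ∃α:κ. A | (t = u) ⊃ A | A ∧ (t = u)`. -/
inductive Ty : Type
  | unit
  | var (x : ℕ)
  | zero
  | succ (t : Ty)
  | arrow (A B : Ty)
  | sum (A B : Ty)
  | prod (A B : Ty)
  | all (x : ℕ) (κ : Srt) (A : Ty)
  | ex (x : ℕ) (κ : Srt) (A : Ty)
  | impl (t u : Ty) (A : Ty)
  | wth (A : Ty) (t u : Ty)
  deriving DecidableEq

namespace Ty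

/-- Substitution `[τ/α]` of a monotype for a universal variable
(stopping at shadowing binders). -/
def subst (τ : Ty) (α : ℕ) : Ty → Ty
  | unit => unit
  | var x => if x = α then τ else var x
  | zero => zero
  | succ t => succ (subst τ α t)
  | arrow A B => arrow (subst τ α A) (subst τ α B)
  | sum A B => sum (subst τ α A) (subst τ α B)
  | prod A B => prod (subst τ α A) (subst τ α B)
  | all x κ A => all x κ (if x = α then A else subst τ α A)
  | ex x κ A => ex x κ (if x = α then A else subst τ α A)
  | impl t u A => impl (subst τ α t) (subst τ α u) (subst τ α A)
  | wth A t u => wth (subst τ α A) (subst τ α t) (subst τ α u)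

/-- Head-negative: headed by a universal quantifier `∀`. -/
def headAll : Ty → Prop
  | all _ _ _ => True
  | _ => False

/-- Head-positive: headed by an existential quantifier `∃`. -/
def headEx : Ty → Prop
  | ex _ _ _ => True
  | _ => False

end Ty

/-- Sorting judgment `Ψ ⊢ t : κ` (defined only on monotypes/index terms). -/
inductive Sorting : DCtx → Ty → Srt → Prop
  | var {Ψ x κ} : (x, κ) ∈ Ψ → Sorting Ψ (Ty.var x) κ
  | unit {Ψ} : Sorting Ψ Ty.unit Srt.star
  | zero {Ψ} : Sorting Ψ Ty.zero Srt.nat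
  | succ {Ψ t} : Sorting Ψ t Srt.nat → Sorting Ψ (Ty.succ t) Srt.nat
  | arrow {Ψ A B} : Sorting Ψ A Srt.star → Sorting Ψ B Srt.star →
      Sorting Ψ (Ty.arrow A B) Srt.star
  | sum {Ψ A B} : Sorting Ψ A Srt.star → Sorting Ψ B Srt.star →
      Sorting Ψ (Ty.sum A B) Srt.star
  | prod {Ψ A B} : Sorting Ψ A Srt.star → Sorting Ψ B Srt.star →
      Sorting Ψ (Ty.prod A B) Srt.star

/-- Proposition well-formedness `Ψ ⊢ t = u prop`: both sides have sort ℕ. -/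
inductive PropWF : DCtx → Ty → Ty → Prop
  | eq {Ψ t u} : Sorting Ψ t Srt.nat → Sorting Ψ u Srt.nat → PropWF Ψ t u

/-- Type well-formedness `Ψ ⊢ A type`. -/
inductive TyWF : DCtx → Ty → Prop
  | var {Ψ x} : (x, Srt.star) ∈ Ψ → TyWF Ψ (Ty.var x)
  | unit {Ψ} : TyWF Ψ Ty.unit
  | arrow {Ψ A B} : TyWF Ψ A → TyWF Ψ B → TyWF Ψ (Ty.arrow A B)
  | sum {Ψ A B} : TyWF Ψ A → TyWF Ψ B → TyWF Ψ (Ty.sum A B)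
  | prod {Ψ A B} : TyWF Ψ A → TyWF Ψ B → TyWF Ψ (Ty.prod A B)
  | all {Ψ x κ A} : TyWF ((x, κ) :: Ψ) A → TyWF Ψ (Ty.all x κ A)
  | ex {Ψ x κ A} : TyWF ((x, κ) :: Ψ) A → TyWF Ψ (Ty.ex x κ A)
  | impl {Ψ t u A} : PropWF Ψ t u → TyWF Ψ A → TyWF Ψ (Ty.impl t u A)
  | wth {Ψ A t u} : TyWF Ψ A → PropWF Ψ t u → TyWF Ψ (Ty.wth A t u)

/-- Polarities ±. -/
inductive Pol : Type
  | pos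
  | neg
  deriving DecidableEq

/-- Declarative subtyping `Ψ ⊢ A ≤± B`. -/
inductive DSub : DCtx → Pol → Ty → Ty → Prop
  | refl {Ψ p A} : ¬ Ty.headAll A → ¬ Ty.headEx A → DSub Ψ p A A
  | allL {Ψ τ κ α A B} : Sorting Ψ τ κ →
      DSub Ψ Pol.neg (Ty.subst τ α A) B → DSub Ψ Pol.neg (Ty.all α κ A) B
  | allR {Ψ β κ A B} : DSub ((β, κ) :: Ψ) Pol.neg A B →
      DSub Ψ Pol.neg A (Ty.all β κ B)
  | exL {Ψ α κ A B} : DSub ((α, κ) :: Ψ) Pol.pos A B →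
      DSub Ψ Pol.pos (Ty.ex α κ A) B
  | exR {Ψ τ κ β A B} : Sorting Ψ τ κ →
      DSub Ψ Pol.pos A (Ty.subst τ β B) → DSub Ψ Pol.pos A (Ty.ex β κ B)
  | posNeg {Ψ A B} : DSub Ψ Pol.neg A B → ¬ Ty.headEx A → ¬ Ty.headEx B →
      DSub Ψ Pol.pos A B
  | negPos {Ψ A B} : DSub Ψ Pol.pos A B → ¬ Ty.headAll A → ¬ Ty.headAll B →
      DSub Ψ Pol.neg A B

/-! A quantified type is related to itself by opening its binder on one side and instantiating
it on the other with the freshly declared variable itself; the polarity-switch rules carry this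
to the opposite polarity, and every other type is covered by `≤±Refl`. -/

namespace Ty

@[simp]
theorem subst_var_self (α : ℕ) (A : Ty) : subst (var α) α A = A := by
  induction A with
  | var x => by_cases hx : x = α <;> simp [subst, hx]
  | all x κ A ih | ex x κ A ih => simp [subst, ih]
  | _ => simp_all [subst]

end Ty

namespace DSub

theorem all_self {Ψ : DCtx} {x : ℕ} {κ : Srt} {A : Ty}
    (h : DSub ((x, κ) :: Ψ) Pol.neg A A) : DSub Ψ Pol.neg (Ty.all x κ A) (Ty.all x κ A) :=
  allR <| allL (τ := Ty.var x) (Sorting.var List.mem_cons_self) (by rwa [Ty.subst_var_self])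

theorem ex_self {Ψ : DCtx} {x : ℕ} {κ : Srt} {A : Ty}
    (h : DSub ((x, κ) :: Ψ) Pol.pos A A) : DSub Ψ Pol.pos (Ty.ex x κ A) (Ty.ex x κ A) :=
  exL <| exR (τ := Ty.var x) (Sorting.var List.mem_cons_self) (by rwa [Ty.subst_var_self])

theorem rfl {Ψ : DCtx} {p : Pol} {A : Ty} : DSub Ψ p A A := by
  induction A generalizing Ψ p with
  | all x κ A ih =>
    cases p with
    | neg => exact all_self ih
    | pos => exact posNeg (all_self ih) not_false not_false
  | ex x κ A ih =>
    cases p with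
    | pos => exact ex_self ih
    | neg => exact negPos (ex_self ih) not_false not_false
  | _ => exact refl not_false not_false

end DSub

theorem decl_sub_refl_general (Ψ : DCtx) (A : Ty) (p : Pol) :
    DSub Ψ p A A :=
  DSub.rfl

/-- **Reflexivity of declarative subtyping**: if `Ψ ⊢ A type` then
`Ψ ⊢ A ≤± A` at either polarity. -/
theorem decl_sub_refl (Ψ : DCtx) (A : Ty) (p : Pol) (h : TyWF Ψ A) :
    DSub Ψ p A A :=
  decl_sub_refl_general Ψ A p
end

section
/- Subtyping inversion: (1) if Ψ ⊢ (∃α:κ. A) ≤⁺ B then Ψ, α:κ ⊢ A ≤⁺ B; (2) if Ψ ⊢ A ≤⁻ (∀β:κ. B) then Ψ, β:κ ⊢ A ≤⁻ B. -/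
theorem Sorting.mono {Ψ Ψ' : DCtx} {t : Ty} {κ : Srt} (h : Sorting Ψ t κ) (hsub : Ψ ⊆ Ψ') :
    Sorting Ψ' t κ := by
  induction h with
  | var hx => exact .var (hsub hx)
  | unit => exact .unit
  | zero => exact .zero
  | succ _ ih => exact .succ ih
  | arrow _ _ ih₁ ih₂ => exact .arrow ih₁ ih₂
  | sum _ _ ih₁ ih₂ => exact .sum ih₁ ih₂
  | prod _ _ ih₁ ih₂ => exact .prod ih₁ ih₂

namespace DSub

/-- A derivation with an existential on the left is a chain of `≤⁺∃R` steps ending in `≤⁺∃L`;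
the witnesses of the `≤⁺∃R` steps stay well-sorted in the extended context. -/
theorem inv_exL {Ψ : DCtx} {α : ℕ} {κ : Srt} {A B : Ty}
    (h : DSub Ψ .pos (.ex α κ A) B) : DSub ((α, κ) :: Ψ) .pos A B := by
  generalize hp : Pol.pos = p at h
  generalize hA : Ty.ex α κ A = A' at h
  induction h with
  | refl _ hEx => subst hA; exact absurd trivial hEx
  | exL h => cases hA; exact h
  | exR hτ _ ih => exact .exR (hτ.mono (List.subset_cons_self _ _)) (ih hp hA)
  | posNeg _ hEx => subst hA; exact absurd trivial hEx
  | allL | allR | negPos => cases hp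

theorem inv_allR {Ψ : DCtx} {β : ℕ} {κ : Srt} {A B : Ty}
    (h : DSub Ψ .neg A (.all β κ B)) : DSub ((β, κ) :: Ψ) .neg A B := by
  generalize hp : Pol.neg = p at h
  generalize hB : Ty.all β κ B = B' at h
  induction h with
  | refl hAll => subst hB; exact absurd trivial hAll
  | allR h => cases hB; exact h
  | allL hτ _ ih => exact .allL (hτ.mono (List.subset_cons_self _ _)) (ih hp hB)
  | negPos _ _ hAll => subst hB; exact absurd trivial hAll
  | exL | exR | posNeg => cases hp

end DSub

/-- **Subtyping inversion**:
(1) if `Ψ ⊢ (∃α:κ. A) ≤⁺ B` then `Ψ, α:κ ⊢ A ≤⁺ B`;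
(2) if `Ψ ⊢ A ≤⁻ (∀β:κ. B)` then `Ψ, β:κ ⊢ A ≤⁻ B`. -/
theorem decl_subtyping_inversion :
    (∀ (Ψ : DCtx) (α : ℕ) (κ : Srt) (A B : Ty),
      DSub Ψ Pol.pos (Ty.ex α κ A) B → DSub ((α, κ) :: Ψ) Pol.pos A B) ∧
    (∀ (Ψ : DCtx) (β : ℕ) (κ : Srt) (A B : Ty),
      DSub Ψ Pol.neg A (Ty.all β κ B) → DSub ((β, κ) :: Ψ) Pol.neg A B) :=
  ⟨fun _ _ _ _ _ => DSub.inv_exL, fun _ _ _ _ _ => DSub.inv_allR⟩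
end

section
/- Subtyping polarity flip: (1) if A and B are both not head-positive (not headed by ∃) and Ψ ⊢ A ≤⁺ B, then Ψ ⊢ A ≤⁻ B with a derivation of the same or smaller size; (2) symmetrically for not head-negative (not headed by ∀) and ≤⁻ implies ≤⁺; (3) if A and B are neither head-positive nor head-negative and Ψ ⊢ A ≤± B then A = B. -/
/-- Declarative subtyping `Ψ ⊢ A ≤± B`, indexed by the size of the derivation. -/
inductive SubN : ℕ → DCtx → Pol → Ty → Ty → Prop
  | refl {Ψ p A} : ¬ Ty.headAll A → ¬ Ty.headEx A → SubN 1 Ψ p A A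
  | allL {n Ψ τ κ α A B} : Sorting Ψ τ κ →
      SubN n Ψ Pol.neg (Ty.subst τ α A) B → SubN (n + 1) Ψ Pol.neg (Ty.all α κ A) B
  | allR {n Ψ β κ A B} : SubN n ((β, κ) :: Ψ) Pol.neg A B →
      SubN (n + 1) Ψ Pol.neg A (Ty.all β κ B)
  | exL {n Ψ α κ A B} : SubN n ((α, κ) :: Ψ) Pol.pos A B →
      SubN (n + 1) Ψ Pol.pos (Ty.ex α κ A) B
  | exR {n Ψ τ κ β A B} : Sorting Ψ τ κ →
      SubN n Ψ Pol.pos A (Ty.subst τ β B) → SubN (n + 1) Ψ Pol.pos A (Ty.ex β κ B)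
  | posNeg {n Ψ A B} : SubN n Ψ Pol.neg A B → ¬ Ty.headEx A → ¬ Ty.headEx B →
      SubN (n + 1) Ψ Pol.pos A B
  | negPos {n Ψ A B} : SubN n Ψ Pol.pos A B → ¬ Ty.headAll A → ¬ Ty.headAll B →
      SubN (n + 1) Ψ Pol.neg A B

namespace SubN

variable {n : ℕ} {Ψ : DCtx} {A B : Ty}

theorem exists_neg_of_pos (hA : ¬ A.headEx) (hB : ¬ B.headEx) (h : SubN n Ψ Pol.pos A B) :
    ∃ m ≤ n, SubN m Ψ Pol.neg A B := by
  cases h with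
  | refl hAll hEx => exact ⟨1, le_rfl, refl hAll hEx⟩
  | exL _ => exact absurd trivial hA
  | exR _ _ => exact absurd trivial hB
  | posNeg h _ _ => exact ⟨_, Nat.le_succ _, h⟩

theorem exists_pos_of_neg (hA : ¬ A.headAll) (hB : ¬ B.headAll) (h : SubN n Ψ Pol.neg A B) :
    ∃ m ≤ n, SubN m Ψ Pol.pos A B := by
  cases h with
  | refl hAll hEx => exact ⟨1, le_rfl, refl hAll hEx⟩
  | allL _ _ => exact absurd trivial hA
  | allR _ => exact absurd trivial hB
  | negPos h _ _ => exact ⟨_, Nat.le_succ _, h⟩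

-- Without quantifiers at the heads only reflexivity and the polarity switches apply,
-- and the switches keep both sides unchanged.
theorem eq_of_not_headEx_of_not_headAll {p : Pol} (hA : ¬ A.headEx) (hA' : ¬ A.headAll)
    (hB : ¬ B.headEx) (hB' : ¬ B.headAll) (h : SubN n Ψ p A B) : A = B := by
  induction h with
  | refl _ _ => rfl
  | allL _ _ _ => exact absurd trivial hA'
  | allR _ _ => exact absurd trivial hB'
  | exL _ _ => exact absurd trivial hA
  | exR _ _ _ => exact absurd trivial hB
  | posNeg _ _ _ ih => exact ih hA hA' hB hB'
  | negPos _ _ _ ih => exact ih hA hA' hB hB'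

end SubN

/-- **Subtyping polarity flip**:
(1) if `A`, `B` are not head-positive and `Ψ ⊢ A ≤⁺ B` then `Ψ ⊢ A ≤⁻ B`
with a derivation of the same or smaller size;
(2) symmetrically for not head-negative, `≤⁻` implies `≤⁺`;
(3) if `A`, `B` are neither head-positive nor head-negative and
`Ψ ⊢ A ≤± B` then `A = B`. -/
theorem decl_polarity_flip :
    (∀ (n : ℕ) (Ψ : DCtx) (A B : Ty), ¬ Ty.headEx A → ¬ Ty.headEx B →
      SubN n Ψ Pol.pos A B → ∃ m ≤ n, SubN m Ψ Pol.neg A B) ∧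
    (∀ (n : ℕ) (Ψ : DCtx) (A B : Ty), ¬ Ty.headAll A → ¬ Ty.headAll B →
      SubN n Ψ Pol.neg A B → ∃ m ≤ n, SubN m Ψ Pol.pos A B) ∧
    (∀ (n : ℕ) (Ψ : DCtx) (p : Pol) (A B : Ty),
      ¬ Ty.headEx A → ¬ Ty.headAll A → ¬ Ty.headEx B → ¬ Ty.headAll B →
      SubN n Ψ p A B → A = B) :=
  ⟨fun _ _ _ _ => SubN.exists_neg_of_pos, fun _ _ _ _ => SubN.exists_pos_of_neg,
    fun _ _ _ _ _ => SubN.eq_of_not_headEx_of_not_headAll⟩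
end
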